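/- Let b : [0,∞) → ℝ be continuously differentiable with linear growth (there exist M, m > 0 with b(t) ≤ M + m·t for all t ≥ 0), let f : [0,∞) → ℝ be continuous, integrable and strictly positive on (0,∞), and fix t ≥ 0, ε > 0, n ∈ ℕ. Then lim_{c→∞} [∫_{t+ε}^∞ e^{-c²s/2 + c·b(s)} sⁿ f(s) ds] / [∫_t^{t+ε} e^{-c²s/2 + c·b(s)} sⁿ f(s) ds] = 0. -/

import Mathlib

/-!
Beyond `t + ε`, linear growth of `b` and `sⁿ ≤ n! eˢ` bound the integrand by
`n! e^{cM + (t+ε)(cm + 1 - c²/2)} f(s)` once `cm + 1 ≤ c²/2`. On `[t + ε/4, t + ε/2]` the integrand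
is at least a positive constant times `e^{cB - c²(t + ε/2)/2}`, with `B` the minimum of `b` there.
The ratio is therefore dominated by the exponential of a quadratic in `c` with leading
coefficient `-ε/4`.
-/

open MeasureTheory Real Filter Set Topology Nat

/-- The integral `I^f_J(n)(c)`. -/
noncomputable def weightedIntegral (b f : ℝ → ℝ) (J : Set ℝ) (n : ℕ) (c : ℝ) : ℝ :=
  ∫ s in J, exp (-c ^ 2 * s / 2 + c * b s) * s ^ n * f s

lemma nonneg_of_continuousOn_Ici_of_pos {f : ℝ → ℝ} (hfc : ContinuousOn f (Ici 0))
    (hfpos : ∀ s > (0 : ℝ), 0 < f s) {s : ℝ} (hs : 0 ≤ s) : 0 ≤ f s := by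
  rcases hs.eq_or_lt with rfl | hs
  · refine ge_of_tendsto ((hfc 0 (mem_Ici.2 le_rfl)).mono Ioi_subset_Ici_self) ?_
    exact eventually_mem_nhdsWithin.mono fun x hx => (hfpos x hx).le
  · exact (hfpos s hs).le

lemma tendsto_quadratic_atBot {a : ℝ} (ha : a < 0) (b c : ℝ) :
    Tendsto (fun x => (a * x + b) * x + c) atTop atBot :=
  tendsto_atBot_add_const_right _ c <|
    (tendsto_atBot_add_const_right _ b (tendsto_id.const_mul_atTop_of_neg ha)).atBot_mul_atTop₀
      tendsto_id

lemma tendsto_div_nhds_zero_of_exp_bounds {α : Type*} {l : Filter α} {N D p q : α → ℝ}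
    {A C : ℝ} (hC : 0 < C) (hN₀ : ∀ᶠ x in l, 0 ≤ N x) (hN : ∀ᶠ x in l, N x ≤ A * exp (p x))
    (hD : ∀ᶠ x in l, C * exp (q x) ≤ D x) (hpq : Tendsto (fun x => p x - q x) l atBot) :
    Tendsto (fun x => N x / D x) l (𝓝 0) := by
  have hbound : Tendsto (fun x => A / C * exp (p x - q x)) l (𝓝 0) := by
    simpa using (tendsto_exp_atBot.comp hpq).const_mul (A / C)
  refine tendsto_of_tendsto_of_tendsto_of_le_of_le' tendsto_const_nhds hbound ?_ ?_
  · filter_upwards [hN₀, hD] with x hNx hDx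
    exact div_nonneg hNx ((by positivity : 0 ≤ C * exp (q x)).trans hDx)
  · filter_upwards [hN₀, hN, hD] with x hNx hNAx hDx
    calc N x / D x ≤ A * exp (p x) / (C * exp (q x)) :=
          div_le_div₀ (hNx.trans hNAx) hNAx (by positivity) hDx
      _ = A / C * exp (p x - q x) := by rw [exp_sub]; field_simp

lemma exp_mul_pow_le_of_linear_growth {M m u s c β : ℝ} (n : ℕ) (hus : u ≤ s) (hs : 0 ≤ s)
    (hc : 0 ≤ c) (hcm : c * m + 1 ≤ c ^ 2 / 2) (hβ : β ≤ M + m * s) :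
    exp (-c ^ 2 * s / 2 + c * β) * s ^ n ≤ n ! * exp (c * M + u * (c * m + 1 - c ^ 2 / 2)) := by
  have hpow : s ^ n ≤ n ! * exp s := by
    have := pow_div_factorial_le_exp s hs n
    rwa [div_le_iff₀ (by positivity), mul_comm] at this
  have hexponent : -c ^ 2 * s / 2 + c * β + s ≤ c * M + u * (c * m + 1 - c ^ 2 / 2) := by
    nlinarith [mul_le_mul_of_nonneg_left hβ hc, mul_le_mul_of_nonneg_right hcm (sub_nonneg.2 hus)]
  calc exp (-c ^ 2 * s / 2 + c * β) * s ^ n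
      ≤ exp (-c ^ 2 * s / 2 + c * β) * (n ! * exp s) := by gcongr
    _ = n ! * exp (-c ^ 2 * s / 2 + c * β + s) := by rw [exp_add (-c ^ 2 * s / 2 + c * β)]; ring
    _ ≤ n ! * exp (c * M + u * (c * m + 1 - c ^ 2 / 2)) := by gcongr

section WeightedIntegral

variable {b f : ℝ → ℝ} {n : ℕ} {c : ℝ}

lemma continuousOn_weightedIntegrand {K : Set ℝ} (hb : ContinuousOn b K) (hf : ContinuousOn f K) :
    ContinuousOn (fun s => exp (-c ^ 2 * s / 2 + c * b s) * s ^ n * f s) K :=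
  ((((continuous_const.mul continuous_id).div_const 2).continuousOn.add
    (continuousOn_const.mul hb)).rexp.mul (continuous_pow n).continuousOn).mul hf

lemma weightedIntegral_nonneg {J : Set ℝ} (hJ : MeasurableSet J) (hf : ∀ s ∈ J, 0 ≤ s ∧ 0 ≤ f s) :
    0 ≤ weightedIntegral b f J n c :=
  setIntegral_nonneg hJ fun s hs => by obtain ⟨hs₀, hfs⟩ := hf s hs; positivity

lemma weightedIntegral_Ici_le {M m u : ℝ} (hu : 0 ≤ u) (hc : 0 ≤ c) (hcm : c * m + 1 ≤ c ^ 2 / 2)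
    (hgrowth : ∀ s ≥ u, b s ≤ M + m * s) (hf : ∀ s ≥ u, 0 ≤ f s) (hfint : IntegrableOn f (Ici u)) :
    weightedIntegral b f (Ici u) n c ≤
      n ! * exp (c * M + u * (c * m + 1 - c ^ 2 / 2)) * ∫ s in Ici u, f s := by
  rw [weightedIntegral, ← integral_const_mul]
  refine integral_mono_of_nonneg ?_ (hfint.const_mul _) ?_ <;>
    filter_upwards [ae_restrict_mem measurableSet_Ici] with s (hs : u ≤ s)
  · have := hf s hs
    have := hu.trans hs
    positivity
  · exact mul_le_mul_of_nonneg_right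
      (exp_mul_pow_le_of_linear_growth n hs (hu.trans hs) hc hcm (hgrowth s hs)) (hf s hs)

lemma exists_le_weightedIntegral_Icc {a a' : ℝ} (ha : 0 < a) (haa' : a < a')
    (hb : ContinuousOn b (Icc a a')) (hfc : ContinuousOn f (Icc a a'))
    (hfpos : ∀ s ∈ Icc a a', 0 < f s) :
    ∃ B, ∃ D > 0, ∀ c ≥ 0,
      D * exp (c * B - c ^ 2 * a' / 2) ≤ weightedIntegral b f (Icc a a') n c := by
  have hne : (Icc a a').Nonempty := nonempty_Icc.2 haa'.le
  obtain ⟨x₀, -, hx₀⟩ := isCompact_Icc.exists_isMinOn hne hb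
  obtain ⟨y₀, hy₀, hy₀min⟩ := isCompact_Icc.exists_isMinOn hne
    ((continuous_pow n).continuousOn.mul hfc)
  have hδ : 0 < y₀ ^ n * f y₀ := by
    have := hfpos y₀ hy₀
    have := ha.trans_le hy₀.1
    positivity
  refine ⟨b x₀, (a' - a) * (y₀ ^ n * f y₀), by nlinarith, fun c hc => ?_⟩
  have hpointwise : ∀ s ∈ Icc a a', y₀ ^ n * f y₀ * exp (c * b x₀ - c ^ 2 * a' / 2) ≤
      exp (-c ^ 2 * s / 2 + c * b s) * s ^ n * f s := by
    intro s hs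
    have hexp : c * b x₀ - c ^ 2 * a' / 2 ≤ -c ^ 2 * s / 2 + c * b s := by
      nlinarith [mul_le_mul_of_nonneg_left (hx₀ hs : b x₀ ≤ b s) hc, sq_nonneg c, hs.2]
    calc y₀ ^ n * f y₀ * exp (c * b x₀ - c ^ 2 * a' / 2)
        ≤ s ^ n * f s * exp (-c ^ 2 * s / 2 + c * b s) :=
          mul_le_mul (hy₀min hs) (exp_le_exp.2 hexp) (exp_pos _).le ((hδ.trans_le (hy₀min hs)).le)
      _ = exp (-c ^ 2 * s / 2 + c * b s) * s ^ n * f s := by ring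
  have hconst : ∫ _ in Icc a a', y₀ ^ n * f y₀ * exp (c * b x₀ - c ^ 2 * a' / 2) =
      (a' - a) * (y₀ ^ n * f y₀) * exp (c * b x₀ - c ^ 2 * a' / 2) := by
    rw [setIntegral_const, measureReal_def, Real.volume_Icc, ENNReal.toReal_ofReal (by linarith),
      smul_eq_mul]
    ring
  rw [← hconst]
  exact setIntegral_mono_on (integrableOn_const measure_Icc_lt_top.ne)
    ((continuousOn_weightedIntegrand hb hfc).integrableOn_compact isCompact_Icc)
    measurableSet_Icc hpointwise

lemma weightedIntegral_Icc_mono {t u a a' : ℝ} (ht : 0 ≤ t) (hta : t ≤ a) (ha'u : a' ≤ u)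
    (hb : ContinuousOn b (Icc t u)) (hfc : ContinuousOn f (Icc t u))
    (hf : ∀ s ∈ Icc t u, 0 ≤ f s) :
    weightedIntegral b f (Icc a a') n c ≤ weightedIntegral b f (Icc t u) n c := by
  refine setIntegral_mono_set ((continuousOn_weightedIntegrand hb hfc).integrableOn_compact
    isCompact_Icc) ?_ (Icc_subset_Icc hta ha'u).eventuallyLE
  filter_upwards [ae_restrict_mem measurableSet_Icc] with s hs
  have := hf s hs
  have := ht.trans hs.1
  positivity

end WeightedIntegral

theorem tail_ratio_tendsto_zero_general (b f : ℝ → ℝ) (M m t ε : ℝ) (n : ℕ)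
    (hb : ContDiffOn ℝ 1 b (Ici 0))
    (hgrowth : ∀ s ≥ (0 : ℝ), b s ≤ M + m * s)
    (hfc : ContinuousOn f (Ici 0)) (hfint : IntegrableOn f (Ici 0))
    (hfpos : ∀ s > (0 : ℝ), 0 < f s)
    (ht : 0 ≤ t) (hε : 0 < ε) :
    Tendsto (fun c =>
        (∫ s in Ici (t + ε), Real.exp (-c ^ 2 * s / 2 + c * b s) * s ^ n * f s) /
        (∫ s in Icc t (t + ε), Real.exp (-c ^ 2 * s / 2 + c * b s) * s ^ n * f s))
      atTop (nhds 0) := by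
  have hbc : ContinuousOn b (Ici 0) := hb.continuousOn
  have hf₀ : ∀ s ≥ (0 : ℝ), 0 ≤ f s := fun s => nonneg_of_continuousOn_Ici_of_pos hfc hfpos
  have hIcc : ∀ a a' : ℝ, 0 ≤ a → Icc a a' ⊆ Ici 0 := fun _ _ ha _ hs => ha.trans hs.1
  obtain ⟨B, D, hD, hlower⟩ := exists_le_weightedIntegral_Icc (n := n)
    (by positivity : 0 < t + ε / 4) (by linarith : t + ε / 4 < t + ε / 2)
    (hbc.mono (hIcc _ _ (by positivity)))
    (hfc.mono (hIcc _ _ (by positivity))) fun s hs => hfpos s (by linarith [hs.1])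
  refine tendsto_div_nhds_zero_of_exp_bounds (A := n ! * ∫ s in Ici (t + ε), f s) hD
    (p := fun c => c * M + (t + ε) * (c * m + 1 - c ^ 2 / 2))
    (q := fun c => c * B - c ^ 2 * (t + ε / 2) / 2) ?_ ?_ ?_ ?_
  · exact .of_forall fun c => weightedIntegral_nonneg measurableSet_Ici fun s hs =>
      ⟨by linarith [mem_Ici.1 hs], hf₀ s (by linarith [mem_Ici.1 hs])⟩
  · filter_upwards [eventually_ge_atTop 0,
      (tendsto_quadratic_atBot (by norm_num : (-1 / 2 : ℝ) < 0) m 1).eventually_le_atBot 0]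
      with c hc hcm
    exact (weightedIntegral_Ici_le (by positivity) hc (by linear_combination hcm)
      (fun s hs => hgrowth s (by linarith)) (fun s hs => hf₀ s (by linarith))
      (hfint.mono_set (Ici_subset_Ici.2 (by positivity)))).trans_eq (mul_right_comm _ _ _)
  · filter_upwards [eventually_ge_atTop 0] with c hc
    exact (hlower c hc).trans (weightedIntegral_Icc_mono ht (by linarith) (by linarith)
      (hbc.mono (hIcc _ _ ht)) (hfc.mono (hIcc _ _ ht)) fun s hs => hf₀ s (ht.trans hs.1))
  · convert tendsto_quadratic_atBot (by linarith : -(ε / 4) < 0) (M + (t + ε) * m - B) (t + ε)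
      using 2
    ring

/-- For a continuously differentiable boundary `b` with linear growth and a continuous,
integrable, strictly positive density `f`, the ratio
`I^f_{[t+ε,∞)}(n)(c) / I^f_{[t,t+ε]}(n)(c)` tends to `0` as `c → ∞`. -/
theorem tail_ratio_tendsto_zero (b f : ℝ → ℝ) (M m t ε : ℝ) (n : ℕ)
    (hb : ContDiffOn ℝ 1 b (Ici 0))
    (hM : 0 < M) (hm : 0 < m) (hgrowth : ∀ s ≥ (0 : ℝ), b s ≤ M + m * s)
    (hfc : ContinuousOn f (Ici 0)) (hfint : IntegrableOn f (Ici 0))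
    (hfpos : ∀ s > (0 : ℝ), 0 < f s)
    (ht : 0 ≤ t) (hε : 0 < ε) :
    Tendsto (fun c =>
        (∫ s in Ici (t + ε), Real.exp (-c ^ 2 * s / 2 + c * b s) * s ^ n * f s) /
        (∫ s in Icc t (t + ε), Real.exp (-c ^ 2 * s / 2 + c * b s) * s ^ n * f s))
      atTop (nhds 0) :=
  tail_ratio_tendsto_zero_general b f M m t ε n hb hgrowth hfc hfint hfpos ht hε
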